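/- arXiv:2410.22998 — 4 statements merged into one kernel-verified Lean document; each statement's English description precedes it below -/
import Mathlib

section
/- Let p be a prime with p ≡ 7 (mod 12) and p ∉ {7, 31}, and let q be a prime power with q ≡ 3 (mod 4). Then p(p-1)/6 ≠ q(q-1)/2. -/
theorem stmt_3 (p q : ℕ) (hp : p.Prime) (hmod : p % 12 = 7)
    (hp7 : p ≠ 7) (hp31 : p ≠ 31)
    (hq : IsPrimePow q) (hqmod : q % 4 = 3) :
    p * (p - 1) / 6 ≠ q * (q - 1) / 2 := by
  intro h
  have hp7' : 7 ≤ p := by omega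
  have hq3 : 3 ≤ q := by omega
  have h6 : 6 ∣ p * (p - 1) :=
    Dvd.dvd.mul_left (Nat.dvd_of_mod_eq_zero (by omega)) p
  have h2 : 2 ∣ q * (q - 1) :=
    Dvd.dvd.mul_left (Nat.dvd_of_mod_eq_zero (by omega)) q
  have heq : p * (p - 1) = 3 * (q * (q - 1)) := by
    calc p * (p - 1) = p * (p - 1) / 6 * 6 := (Nat.div_mul_cancel h6).symm
      _ = q * (q - 1) / 2 * 6 := by rw [h]
      _ = q * (q - 1) / 2 * 2 * 3 := by ring
      _ = 3 * (q * (q - 1)) := by rw [Nat.div_mul_cancel h2]; ring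
  have hqlt : q < p := by
    by_contra hle
    push_neg at hle
    have h1 : p * (p - 1) ≤ q * (q - 1) :=
      Nat.mul_le_mul hle (by omega)
    have h2' : 0 < q * (q - 1) := Nat.mul_pos (by omega) (by omega)
    omega
  have hpd : p ∣ 3 * (q * (q - 1)) := heq ▸ dvd_mul_right p (p - 1)
  rcases (Nat.Prime.dvd_mul hp).mp hpd with h3 | hqq
  · have := Nat.le_of_dvd (by norm_num) h3
    omega
  · rcases (Nat.Prime.dvd_mul hp).mp hqq with hdq | hdq
    · have := Nat.le_of_dvd (by omega) hdq
      omega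
    · have := Nat.le_of_dvd (by omega) hdq
      omega
end

section
/- Let p be a prime with p ≡ 7 (mod 12), and suppose p(p-1)/6 = q(q-1)/2 for some prime power q. If p does not divide q, then p(p-1)/6 < q(q-1)/2, a contradiction; hence p divides q. -/
theorem stmt_5 (p q : ℕ) (hp : p.Prime) (hmod : p % 12 = 7)
    (hq : IsPrimePow q) (hqmod : q % 4 = 3)
    (heq : p * (p - 1) / 6 = q * (q - 1) / 2) :
    p ∣ q := by
  by_contra hnd
  obtain ⟨a, ha⟩ : 6 ∣ p - 1 := by omega
  obtain ⟨b, hb⟩ : 2 ∣ q - 1 := by omega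
  have h1 : p * (p - 1) / 6 = p * a := by
    rw [ha, show p * (6 * a) = (p * a) * 6 by ring, Nat.mul_div_cancel _ (by norm_num)]
  have h2 : q * (q - 1) / 2 = q * b := by
    rw [hb, show q * (2 * b) = (q * b) * 2 by ring, Nat.mul_div_cancel _ (by norm_num)]
  have heq' : p * a = q * b := by rw [← h1, ← h2, heq]
  have hpb : p ∣ b := by
    rcases (Nat.Prime.dvd_mul hp).mp ⟨a, heq'.symm⟩ with h | h
    · exact absurd h hnd
    · exact h
  have hb1 : 0 < b := by omega
  have hpleb : p ≤ b := Nat.le_of_dvd hb1 hpb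
  have hap : a < p := by omega
  have hbq : b < q := by omega
  nlinarith [heq', hpleb, hap, hbq, hb1]
end

section
/- Let G be a finite group that is a direct product G = H × K with |H| = |K| = m ≥ 3. Then G is not a B-group: there exists a primitive permutation group of degree m² containing a regular subgroup isomorphic to G which is not 2-transitive. -/
/-- A permutation group (as a group acting on `Ω`) is 2-transitive. -/
def IsDoublyTransitive (K Ω : Type*) [Group K] [MulAction K Ω] : Prop :=
  ∀ a b c d : Ω, a ≠ b → c ≠ d → ∃ g : K, g • a = c ∧ g • b = d

/-- Primitive: transitive and every block is trivial. -/
def IsPrimitivePermGroup (K Ω : Type*) [Group K] [MulAction K Ω] : Prop :=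
  MulAction.IsPretransitive K Ω ∧
    ∀ B : Set Ω, MulAction.IsBlock K B → MulAction.IsTrivialBlock B

/-!
The witness is the automorphism group `P` of the lattice graph `L₂(m) = K_m □ K_m` on
`Fin m × Fin m`. Identifying `H` and `K` with `Fin m`, the left regular representation of `H × K`
acts coordinatewise, so it is a regular subgroup of `P`. Since `P` preserves adjacency it is not
2-transitive. It is primitive: an automorphism fixing a point of a block maps the block to itself,
and `P` contains every `σ × τ` and the coordinate swap; with these, a block with two points
contains two points of one row (this needs a third element of `Fin m`), hence that whole row,
hence everything.
-/

open Equiv MulAction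

def IsRegularPermGroup {X : Type*} (L : Subgroup (Perm X)) : Prop :=
  ∀ x y : X, ∃! g : L, (g : Perm X) x = y

theorem isRegularPermGroup_range_toPermHom (G : Type*) [Group G] :
    IsRegularPermGroup (toPermHom G G).range := by
  intro x y
  refine ⟨⟨toPerm (y * x⁻¹), y * x⁻¹, rfl⟩, by simp, ?_⟩
  rintro ⟨_, g, rfl⟩ hg
  simp only [toPermHom_apply, toPerm_apply, smul_eq_mul] at hg
  simp [← hg]

namespace Subgroup

variable {X Y : Type*} (e : X ≃ Y) (P : Subgroup (Perm X))

def permCongr : Subgroup (Perm Y) := P.map e.permCongrHom.toMonoidHom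

noncomputable def equivPermCongr : P ≃* P.permCongr e :=
  P.equivMapOfInjective _ e.permCongrHom.injective

theorem equivPermCongr_smul (g : P) (x : X) : P.equivPermCongr e g • e x = e (g • x) :=
  show e ((g : Perm X) (e.symm (e x))) = e ((g : Perm X) x) by rw [e.symm_apply_apply]

variable {P}

theorem permCongr_mono {Q : Subgroup (Perm X)} (h : P ≤ Q) : P.permCongr e ≤ Q.permCongr e :=
  map_mono h

theorem _root_.IsRegularPermGroup.permCongr (hP : IsRegularPermGroup P) :
    IsRegularPermGroup (P.permCongr e) := by
  intro x y
  refine ((P.equivPermCongr e).toEquiv.existsUnique_congr fun g => ?_).mp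
    (hP (e.symm x) (e.symm y))
  show g • e.symm x = e.symm y ↔ P.equivPermCongr e g • x = y
  rw [← e.apply_symm_apply x, equivPermCongr_smul, e.symm_apply_apply, ← Equiv.eq_symm_apply]

theorem isPreprimitive_permCongr [IsPreprimitive P X] : IsPreprimitive (P.permCongr e) Y :=
  let f : X →ₑ[P.equivPermCongr e] Y := ⟨e, fun g x => (equivPermCongr_smul e P g x).symm⟩
  (isPreprimitive_congr (P.equivPermCongr e).surjective (f := f) e.bijective).mp ‹_›

theorem not_isDoublyTransitive_permCongr (hP : ¬ IsDoublyTransitive P X) :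
    ¬ IsDoublyTransitive (P.permCongr e) Y := by
  intro h
  refine hP fun a b c d hab hcd => ?_
  obtain ⟨g, hac, hbd⟩ := h (e a) (e b) (e c) (e d) (e.injective.ne hab) (e.injective.ne hcd)
  obtain ⟨g, rfl⟩ := (P.equivPermCongr e).surjective g
  rw [equivPermCongr_smul, e.apply_eq_iff_eq] at hac hbd
  exact ⟨g, hac, hbd⟩

end Subgroup

theorem MulAction.IsBlock.apply_mem_of_apply_mem {X : Type*} {P : Subgroup (Perm X)}
    {B : Set X} (hB : IsBlock P B) {f : Perm X} (hf : f ∈ P) {p q : X} (hp : p ∈ B)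
    (hfp : f p ∈ B) (hq : q ∈ B) : f q ∈ B := by
  rw [← hB.smul_eq_of_mem (g := ⟨f, hf⟩) hp hfp]
  exact Set.smul_mem_smul_set hq

namespace SimpleGraph

variable {V : Type*} (G : SimpleGraph V)

def autGroup : Subgroup (Perm V) where
  carrier := {σ | ∀ x y, G.Adj (σ x) (σ y) ↔ G.Adj x y}
  one_mem' _ _ := Iff.rfl
  mul_mem' hσ hτ x y := (hσ _ _).trans (hτ x y)
  inv_mem' {σ} hσ x y := by simpa using (hσ (σ⁻¹ x) (σ⁻¹ y)).symm

variable {G}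

theorem not_isDoublyTransitive_autGroup {x y u v : V} (hxy : G.Adj x y) (huv : u ≠ v)
    (hnuv : ¬ G.Adj u v) : ¬ IsDoublyTransitive G.autGroup V := by
  intro h
  obtain ⟨g, rfl, rfl⟩ := h x y u v hxy.ne huv
  exact hnuv ((g.2 x y).2 hxy)

end SimpleGraph

open SimpleGraph

/-- The lattice graph `L₂(α)`: distinct squares are adjacent when they share a row or column. -/
abbrev rookGraph (α : Type*) : SimpleGraph (α × α) := (⊤ : SimpleGraph α) □ ⊤

namespace rookGraph

variable {α : Type*}

theorem prodCongr_mem_autGroup (σ τ : Perm α) : prodCongr σ τ ∈ (rookGraph α).autGroup := by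
  intro x y
  simp [boxProd_adj, σ.injective.eq_iff, τ.injective.eq_iff]

theorem prodComm_mem_autGroup : (prodComm α α : Perm (α × α)) ∈ (rookGraph α).autGroup := by
  intro x y
  simp [boxProd_adj, or_comm]

theorem not_isDoublyTransitive_autGroup [Nontrivial α] :
    ¬ IsDoublyTransitive (rookGraph α).autGroup (α × α) := by
  obtain ⟨a, b, hab⟩ := exists_pair_ne α
  refine SimpleGraph.not_isDoublyTransitive_autGroup (x := (a, a)) (y := (a, b)) (u := (a, a))
    (v := (b, b)) ?_ ?_ ?_ <;> simp [boxProd_adj, hab]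

theorem permCongr_range_toPermHom_le {H K : Type*} [Group H] [Group K] (eH : H ≃ α)
    (eK : K ≃ α) :
    (toPermHom (H × K) (H × K)).range.permCongr (eH.prodCongr eK) ≤
      (rookGraph α).autGroup := by
  rintro _ ⟨_, ⟨⟨h, k⟩, rfl⟩, rfl⟩
  convert prodCongr_mem_autGroup (eH.permCongr (toPerm h)) (eK.permCongr (toPerm k)) using 1
  ext ⟨x, y⟩ <;> simp [Equiv.permCongr_apply]

section Blocks

variable {B : Set (α × α)} (hB : IsBlock (rookGraph α).autGroup B)
include hB

theorem mem_row_of_isBlock {a b b' : α} (hbb' : b ≠ b') (hb : (a, b) ∈ B)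
    (hb' : (a, b') ∈ B) (d : α) : (a, d) ∈ B := by
  classical
  obtain rfl | hdb := eq_or_ne d b
  · exact hb
  have hfix : prodCongr 1 (swap b' d) (a, b) = (a, b) := by
    simp [swap_apply_of_ne_of_ne hbb' hdb.symm]
  simpa using hB.apply_mem_of_apply_mem (prodCongr_mem_autGroup 1 (swap b' d)) hb
    (by rwa [hfix]) hb'

theorem eq_univ_of_isBlock_of_mem_row {a b b' : α} (hbb' : b ≠ b') (hb : (a, b) ∈ B)
    (hb' : (a, b') ∈ B) : B = Set.univ := by
  classical
  have hrow := mem_row_of_isBlock hB hbb' hb hb'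
  refine Set.eq_univ_of_forall fun ⟨u, v⟩ => ?_
  let σ := swap a v
  -- `(x, y) ↦ (σ y, σ x)` fixes `(a, v)` and sends `(a, σ u)` to `(u, v)`.
  have hf := mul_mem (prodCongr_mem_autGroup σ σ) prodComm_mem_autGroup
  have hfix : (prodCongr σ σ * prodComm α α) (a, v) = (a, v) := by simp [σ]
  simpa [σ] using hB.apply_mem_of_apply_mem hf (hrow v) (by rw [hfix]; exact hrow v)
    (hrow (σ u))

theorem eq_univ_of_isBlock (hα : 3 ≤ ENat.card α) {x y : α × α} (hx : x ∈ B) (hy : y ∈ B)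
    (hxy : x ≠ y) : B = Set.univ := by
  classical
  obtain ⟨a, b⟩ := x
  obtain ⟨c, d⟩ := y
  obtain rfl | hac := eq_or_ne a c
  · exact eq_univ_of_isBlock_of_mem_row hB (by simpa using hxy) hx hy
  obtain rfl | hbd := eq_or_ne b d
  · let σ := swap a b
    have hf := mul_mem (prodCongr_mem_autGroup σ σ) prodComm_mem_autGroup
    have hfix : (prodCongr σ σ * prodComm α α) (a, b) = (a, b) := by simp [σ]
    have hmem : (a, σ c) ∈ B := by
      simpa [σ] using hB.apply_mem_of_apply_mem hf hx (by rwa [hfix]) hy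
    refine eq_univ_of_isBlock_of_mem_row hB ?_ hx hmem
    rw [Ne, eq_comm, swap_apply_eq_iff, swap_apply_right]
    exact hac.symm
  · obtain ⟨d', hd'd, hd'b⟩ := ENat.exists_ne_ne_of_three_le hα d b
    have hfix : prodCongr 1 (swap d d') (a, b) = (a, b) := by
      simp [swap_apply_of_ne_of_ne hbd hd'b.symm]
    have hmem : (c, d') ∈ B := by
      simpa using hB.apply_mem_of_apply_mem (prodCongr_mem_autGroup 1 (swap d d')) hx
        (by rwa [hfix]) hy
    exact eq_univ_of_isBlock_of_mem_row hB hd'd.symm hy hmem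

end Blocks

theorem isPreprimitive_autGroup (hα : 3 ≤ ENat.card α) :
    IsPreprimitive (rookGraph α).autGroup (α × α) where
  exists_smul_eq x y := by
    classical
    exact ⟨⟨_, prodCongr_mem_autGroup (swap x.1 y.1) (swap x.2 y.2)⟩,
      by ext <;> simp [Subgroup.smul_def]⟩
  isTrivialBlock_of_isBlock {B} hB := by
    refine or_iff_not_imp_left.mpr fun hB' => ?_
    obtain ⟨x, hx, y, hy, hxy⟩ := Set.not_subsingleton_iff.mp hB'
    exact eq_univ_of_isBlock hB hα hx hy hxy

end rookGraph

theorem stmt_10 (H K : Type*) [Group H] [Group K] [Fintype H] [Fintype K]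
    (m : ℕ) (hm : 3 ≤ m) (hH : Fintype.card H = m) (hK : Fintype.card K = m) :
    ∃ P : Subgroup (Equiv.Perm (Fin (m ^ 2))),
      IsPrimitivePermGroup P (Fin (m ^ 2)) ∧
      (∃ L : Subgroup (Equiv.Perm (Fin (m ^ 2))), L ≤ P ∧
        (∀ x y : Fin (m ^ 2), ∃! g : L, (g : Equiv.Perm (Fin (m ^ 2))) x = y) ∧
        Nonempty (L ≃* (H × K))) ∧
      ¬ IsDoublyTransitive P (Fin (m ^ 2)) := by
  have : Nontrivial (Fin m) := Fin.nontrivial_iff_two_le.mpr (by omega)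
  have := rookGraph.isPreprimitive_autGroup (α := Fin m) (by simpa using hm)
  let e : Fin m × Fin m ≃ Fin (m ^ 2) := finProdFinEquiv.trans (finCongr (sq m).symm)
  let q : H × K ≃ Fin m × Fin m :=
    (Fintype.equivFinOfCardEq hH).prodCongr (Fintype.equivFinOfCardEq hK)
  let P := (rookGraph (Fin m)).autGroup
  let L := (toPermHom (H × K) (H × K)).range
  have hP := Subgroup.isPreprimitive_permCongr e (P := P)
  refine ⟨P.permCongr e, ⟨hP.toIsPretransitive, fun _ => hP.isTrivialBlock_of_isBlock⟩,
    ⟨(L.permCongr q).permCongr e,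
      Subgroup.permCongr_mono e (rookGraph.permCongr_range_toPermHom_le _ _),
      ((isRegularPermGroup_range_toPermHom _).permCongr q).permCongr e, ?_⟩,
    Subgroup.not_isDoublyTransitive_permCongr e rookGraph.not_isDoublyTransitive_autGroup⟩
  exact ⟨((L.permCongr q).equivPermCongr e).symm.trans <| (L.equivPermCongr q).symm.trans
    (MonoidHom.ofInjective toPerm_injective).symm⟩
end

section
/- If K is a transitive permutation group on a set Ω containing a regular subgroup G, and S is the set of orbits of the point stabilizer K_α on Ω identified with G (via g ↦ α·g), then S is a partition of G with {1} ∈ S and X⁻¹ ∈ S for every X ∈ S, and the ℤ-span of the elements ∑_{x∈X} x (X ∈ S) in the group ring ℤG is closed under multiplication (i.e., forms a Schur ring over G). -/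
/-!
Transport the action of the stabilizer `K_α` on `Ω` to `G` along the bijection `g ↦ g • α`.
The members of `S` are then the orbits of this action on `G`, which fixes `1`. The key point is
that `(h • a)⁻¹ * (h • b)` always lies in the orbit of `a⁻¹ * b`, witnessed by
`(h • a)⁻¹ * h * a ∈ K_α`. Reindexing `a ↦ h • a` in the convolution
`(v * w) g = ∑ a, v a * w (a⁻¹ * g)` then shows that the elements of `ℤ[G]` with coefficients
constant on orbits form a ring, and these are exactly the `ℤ`-span of the orbit sums.
Inverse-closure is the special case `b = 1` of the key point.
-/

open scoped Classical

namespace MonoidAlgebra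

theorem coeff_sum_single_one {G : Type*} (X : Set G) [Fintype X] (g : G) :
    (∑ x ∈ X.toFinset, single x (1 : ℤ)).coeff g = if g ∈ X then 1 else 0 := by
  simp [coeff_sum, Finsupp.single_apply]

end MonoidAlgebra

namespace MulAction

open MonoidAlgebra

section OrbitSums

variable (H : Type*) {G : Type*} [Group H] [MulAction H G]

def invariantCoeffs : Submodule ℤ (MonoidAlgebra ℤ G) where
  carrier := {v | ∀ (h : H) (g : G), v.coeff (h • g) = v.coeff g}
  add_mem' hv hw h g := by simp [hv h g, hw h g]
  zero_mem' h g := rfl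
  smul_mem' c v hv h g := by rw [coeff_smul_apply, coeff_smul_apply, hv h g]

variable {H}

theorem coeff_eq_of_mem_orbit {v : MonoidAlgebra ℤ G} (hv : v ∈ invariantCoeffs H)
    {g g' : G} (hg : g' ∈ orbit H g) : v.coeff g' = v.coeff g := by
  obtain ⟨h, rfl⟩ := hg
  exact hv h g

theorem existsUnique_mem_range_orbit (g : G) : ∃! X, X ∈ Set.range (orbit H) ∧ g ∈ X :=
  ⟨orbit H g, ⟨⟨g, rfl⟩, mem_orbit_self g⟩, by
    rintro _ ⟨⟨g', rfl⟩, hg⟩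
    exact (orbit_eq_iff.mpr hg).symm⟩

theorem span_orbitSums_eq_invariantCoeffs [Fintype G] :
    Submodule.span ℤ {v : MonoidAlgebra ℤ G |
      ∃ X ∈ Set.range (orbit H), v = ∑ x ∈ X.toFinset, single x (1 : ℤ)} =
      invariantCoeffs H := by
  apply le_antisymm
  · rw [Submodule.span_le]
    rintro _ ⟨_, ⟨g₀, rfl⟩, rfl⟩ h g
    simp only [coeff_sum_single_one, ← orbit_eq_iff, orbit_smul]
  · intro v hv
    have hdecomp : v = ∑ q : orbitRel.Quotient H G,
        v.coeff q.out • ∑ x ∈ (orbit H q.out).toFinset, single x (1 : ℤ) := by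
      ext g
      rw [coeff_sum, Finsupp.finsetSum_apply]
      simp only [coeff_smul_apply, coeff_sum_single_one, smul_eq_mul, mul_ite, mul_one, mul_zero]
      rw [Finset.sum_eq_single ⟦g⟧]
      · have hg : g ∈ orbit H (⟦g⟧ : orbitRel.Quotient H G).out :=
          mem_orbit_symm.mp (Quotient.mk_out (s := orbitRel H G) g)
        rw [if_pos hg, coeff_eq_of_mem_orbit hv (mem_orbit_symm.mp hg)]
      · intro q _ hq
        refine if_neg fun hg => hq ?_
        rw [← Quotient.out_eq q]
        exact Quotient.sound (mem_orbit_symm.mp hg)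
      · simp
    rw [hdecomp]
    exact Submodule.sum_mem _ fun q _ =>
      Submodule.smul_mem _ _ (Submodule.subset_span ⟨_, ⟨q.out, rfl⟩, rfl⟩)

variable [Group G]

theorem orbit_one (hone : ∀ h : H, h • (1 : G) = 1) : orbit H (1 : G) = {1} := by
  ext x
  simp [mem_orbit_iff, hone, eq_comm]

theorem inv_orbit_subset (hone : ∀ h : H, h • (1 : G) = 1)
    (hcompat : ∀ (h : H) (a b : G), (h • a)⁻¹ * (h • b) ∈ orbit H (a⁻¹ * b)) (g : G) :
    (orbit H g)⁻¹ ⊆ orbit H g⁻¹ := by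
  rintro x ⟨h, hx⟩
  simpa [hone, hx] using hcompat h g 1

theorem inv_orbit (hone : ∀ h : H, h • (1 : G) = 1)
    (hcompat : ∀ (h : H) (a b : G), (h • a)⁻¹ * (h • b) ∈ orbit H (a⁻¹ * b)) (g : G) :
    (orbit H g)⁻¹ = orbit H g⁻¹ := by
  refine (inv_orbit_subset hone hcompat g).antisymm ?_
  simpa using Set.inv_subset_inv.mpr (inv_orbit_subset hone hcompat g⁻¹)

theorem mul_mem_invariantCoeffs [Fintype G]
    (hcompat : ∀ (h : H) (a b : G), (h • a)⁻¹ * (h • b) ∈ orbit H (a⁻¹ * b))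
    {v w : MonoidAlgebra ℤ G} (hv : v ∈ invariantCoeffs H) (hw : w ∈ invariantCoeffs H) :
    v * w ∈ invariantCoeffs H := by
  intro h g
  rw [coeff_mul_apply_left, coeff_mul_apply_left, Finsupp.sum_fintype _ _ (by simp),
    Finsupp.sum_fintype _ _ (by simp), ← Equiv.sum_comp (toPerm h)]
  refine Finset.sum_congr rfl fun a _ => ?_
  rw [toPerm_apply, hv h a, coeff_eq_of_mem_orbit hw (hcompat h a g)]

end OrbitSums

section StabilizerAction

variable {K Ω : Type*} [Group K] [MulAction K Ω] {G : Subgroup K} {α : Ω}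
  [MulAction (stabilizer K α) G]

theorem mem_orbit_iff_smul_mem_orbit
    (hσ : ∀ (h : stabilizer K α) (g : G), ((h • g : G) : K) • α = (h : K) • ((g : K) • α))
    (hinj : Function.Injective fun g : G => (g : K) • α) {g g' : G} :
    g' ∈ orbit (stabilizer K α) g ↔ (g' : K) • α ∈ orbit (stabilizer K α) ((g : K) • α) :=
  ⟨fun ⟨h, hh⟩ => ⟨h, hh ▸ (hσ h g).symm⟩, fun ⟨h, hh⟩ => ⟨h, hinj ((hσ h g).trans hh)⟩⟩

theorem range_orbit_eq
    (hσ : ∀ (h : stabilizer K α) (g : G), ((h • g : G) : K) • α = (h : K) • ((g : K) • α))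
    (hinj : Function.Injective fun g : G => (g : K) • α)
    (hsurj : ∀ ω : Ω, ∃ g : G, (g : K) • α = ω) :
    Set.range (orbit (stabilizer K α)) = {Y | ∃ ω : Ω,
      Y = {g : G | (g : K) • α ∈ orbit (stabilizer K α) ω}} := by
  ext Y
  constructor
  · rintro ⟨g, rfl⟩
    exact ⟨(g : K) • α, Set.ext fun g' => mem_orbit_iff_smul_mem_orbit hσ hinj⟩
  · rintro ⟨ω, rfl⟩
    obtain ⟨g, rfl⟩ := hsurj ω
    exact ⟨g, Set.ext fun g' => mem_orbit_iff_smul_mem_orbit hσ hinj⟩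

theorem stabilizer_smul_one
    (hσ : ∀ (h : stabilizer K α) (g : G), ((h • g : G) : K) • α = (h : K) • ((g : K) • α))
    (hinj : Function.Injective fun g : G => (g : K) • α) (h : stabilizer K α) :
    h • (1 : G) = 1 :=
  hinj <| by simpa only [hσ, OneMemClass.coe_one, one_smul] using mem_stabilizer_iff.mp h.2

theorem inv_smul_mul_smul_mem_orbit
    (hσ : ∀ (h : stabilizer K α) (g : G), ((h • g : G) : K) • α = (h : K) • ((g : K) • α))
    (hinj : Function.Injective fun g : G => (g : K) • α) (h : stabilizer K α) (a b : G) :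
    (h • a)⁻¹ * (h • b) ∈ orbit (stabilizer K α) (a⁻¹ * b) := by
  have hk : ((h • a : G) : K)⁻¹ * h * a ∈ stabilizer K α := by
    rw [mem_stabilizer_iff, mul_smul, mul_smul, ← hσ, inv_smul_smul]
  refine ⟨⟨_, hk⟩, hinj ?_⟩
  simp only [hσ, Subgroup.coe_mul, Subgroup.coe_inv, mul_smul, smul_inv_smul]

end StabilizerAction

end MulAction

open MulAction

theorem stmt_15_general {K Ω : Type*} [Group K] [Fintype K] [MulAction K Ω]
    (G : Subgroup K)
    (hreg : ∀ x y : Ω, ∃! g : G, (g : K) • x = y)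
    (α : Ω)
    (S : Set (Set G))
    (hS : S = {Y | ∃ ω : Ω,
      Y = {g : G | (g : K) • α ∈ MulAction.orbit (MulAction.stabilizer K α) ω}}) :
    ({(1 : G)} : Set G) ∈ S ∧
    (∀ X ∈ S, X⁻¹ ∈ S) ∧
    (∀ g : G, ∃! X, X ∈ S ∧ g ∈ X) ∧
    (∀ a ∈ Submodule.span ℤ {v : MonoidAlgebra ℤ G |
        ∃ X ∈ S, v = ∑ x ∈ X.toFinset, MonoidAlgebra.single x (1 : ℤ)},
      ∀ b ∈ Submodule.span ℤ {v : MonoidAlgebra ℤ G |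
        ∃ X ∈ S, v = ∑ x ∈ X.toFinset, MonoidAlgebra.single x (1 : ℤ)},
      a * b ∈ Submodule.span ℤ {v : MonoidAlgebra ℤ G |
        ∃ X ∈ S, v = ∑ x ∈ X.toFinset, MonoidAlgebra.single x (1 : ℤ)}) := by
  have hinj : Function.Injective fun g : G => (g : K) • α := fun _ _ h => (hreg α _).unique h rfl
  have hsurj : ∀ ω : Ω, ∃ g : G, (g : K) • α = ω := fun ω => (hreg α ω).exists
  let e : G ≃ Ω := Equiv.ofBijective _ ⟨hinj, hsurj⟩
  let : MulAction (stabilizer K α) G := e.mulAction _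
  have hσ : ∀ (h : stabilizer K α) (g : G), ((h • g : G) : K) • α = (h : K) • ((g : K) • α) :=
    fun h g => e.apply_symm_apply _
  obtain rfl : S = Set.range (orbit (stabilizer K α)) :=
    hS.trans (range_orbit_eq hσ hinj hsurj).symm
  have hone := stabilizer_smul_one hσ hinj
  have hcompat := inv_smul_mul_smul_mem_orbit hσ hinj
  refine ⟨⟨1, orbit_one hone⟩, ?_, existsUnique_mem_range_orbit, ?_⟩
  · rintro _ ⟨g, rfl⟩
    exact ⟨g⁻¹, (inv_orbit hone hcompat g).symm⟩
  · rw [span_orbitSums_eq_invariantCoeffs]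
    exact fun a ha b hb => mul_mem_invariantCoeffs hcompat ha hb

/-- Schur's theorem (1933): the orbits of a point stabilizer of a transitive group `K`,
transported to a regular subgroup `G` via `g ↦ g • α`, form an inverse-closed partition of `G`
containing `{1}` whose simple quantities span a `ℤ`-submodule of the group ring `ℤ[G]` that is
closed under multiplication (a Schur ring over `G`). -/
theorem stmt_15 {K Ω : Type*} [Group K] [Fintype K] [MulAction K Ω]
    (htrans : MulAction.IsPretransitive K Ω)
    (G : Subgroup K)
    (hreg : ∀ x y : Ω, ∃! g : G, (g : K) • x = y)
    (α : Ω)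
    (S : Set (Set G))
    (hS : S = {Y | ∃ ω : Ω,
      Y = {g : G | (g : K) • α ∈ MulAction.orbit (MulAction.stabilizer K α) ω}}) :
    ({(1 : G)} : Set G) ∈ S ∧
    (∀ X ∈ S, X⁻¹ ∈ S) ∧
    (∀ g : G, ∃! X, X ∈ S ∧ g ∈ X) ∧
    (∀ a ∈ Submodule.span ℤ {v : MonoidAlgebra ℤ G |
        ∃ X ∈ S, v = ∑ x ∈ X.toFinset, MonoidAlgebra.single x (1 : ℤ)},
      ∀ b ∈ Submodule.span ℤ {v : MonoidAlgebra ℤ G |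
        ∃ X ∈ S, v = ∑ x ∈ X.toFinset, MonoidAlgebra.single x (1 : ℤ)},
      a * b ∈ Submodule.span ℤ {v : MonoidAlgebra ℤ G |
        ∃ X ∈ S, v = ∑ x ∈ X.toFinset, MonoidAlgebra.single x (1 : ℤ)}) :=
  stmt_15_general G hreg α S hS
end
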